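/- Let 𝒳, 𝒮, 𝒴 be finite sets, P_S a pmf on 𝒮, P_{Y|XS} a channel, b, c : 𝒳 → ℝ≥0 cost functions, μ ≥ 0 and λ ≥ 0. Fix a conditional pmf Q_{X|YS} with Q_{X|YS}(x|y,s) > 0 for all x, y, s. Define g(x) := Σ_{s,y} P_S(s) P_{Y|XS}(y|x,s) ln Q_{X|YS}(x|y,s) − λ b(x) − μ c(x), and the Gibbs pmf P*(x) := e^{g(x)} / Σ_{x'} e^{g(x')}. Then P* maximizes the Lagrangian P_X ↦ J_μ(P_X, Q_{X|YS}) − λ Σ_x P_X(x) b(x) over all pmfs P_X on 𝒳, where J_μ(P_X, Q_{X|YS}) := Σ_{x,s,y} P_X(x) P_S(s) P_{Y|XS}(y|x,s) ln( Q_{X|YS}(x|y,s) / P_X(x) ) − μ Σ_x P_X(x) c(x) (with convention 0·ln(·/0) = 0). In particular, if λ satisfies Σ_x P*(x) b(x) = B, then P* maximizes J_μ(·, Q_{X|YS}) over all pmfs P_X with Σ_x P_X(x) b(x) ≤ B. -/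

import Mathlib

open Finset

/-- The real-valued Blahut–Arimoto objective (natural logarithm), with the
convention `0 · ln(·/0) = 0` (automatic since the factor `P x` multiplies). -/
noncomputable def Jmu {𝒳 𝒮 𝒴 : Type} [Fintype 𝒳] [Fintype 𝒮] [Fintype 𝒴]
    (PS : 𝒮 → ℝ) (W : 𝒳 → 𝒮 → 𝒴 → ℝ) (c : 𝒳 → ℝ) (μ : ℝ)
    (P : 𝒳 → ℝ) (Q : 𝒴 → 𝒮 → 𝒳 → ℝ) : ℝ :=
  (∑ x, ∑ s, ∑ y, P x * PS s * W x s y * Real.log (Q y s x / P x))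
    - μ * ∑ x, P x * c x

section aux

variable {𝒳 𝒮 𝒴 : Type} [Fintype 𝒳] [Fintype 𝒮] [Fintype 𝒴]

lemma inner_rewrite (PS : 𝒮 → ℝ) (hPS1 : ∑ s, PS s = 1)
    (W : 𝒳 → 𝒮 → 𝒴 → ℝ) (hW1 : ∀ x s, ∑ y, W x s y = 1)
    (Q : 𝒴 → 𝒮 → 𝒳 → ℝ) (hQ : ∀ y s x, 0 < Q y s x)
    (P : 𝒳 → ℝ) (hP0 : ∀ x, 0 ≤ P x) (x : 𝒳) :
    ∑ s, ∑ y, P x * PS s * W x s y * Real.log (Q y s x / P x)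
      = P x * ((∑ s, ∑ y, PS s * W x s y * Real.log (Q y s x)) - Real.log (P x)) := by
  rcases eq_or_lt_of_le (hP0 x) with h | h
  · simp [← h]
  · have key : ∀ s y, P x * PS s * W x s y * Real.log (Q y s x / P x)
        = P x * (PS s * W x s y * Real.log (Q y s x))
          - (P x * Real.log (P x)) * (PS s * W x s y) := by
      intro s y
      rw [Real.log_div (ne_of_gt (hQ y s x)) (ne_of_gt h)]
      ring
    have h1 : ∑ s, PS s * ∑ y, W x s y = 1 := by simp [hW1, hPS1]
    simp only [key, Finset.sum_sub_distrib, ← Finset.mul_sum]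
    rw [h1]
    ring

lemma gibbs_ineq [Nonempty 𝒳] (g : 𝒳 → ℝ) (P : 𝒳 → ℝ)
    (hP0 : ∀ x, 0 ≤ P x) (hP1 : ∑ x, P x = 1) :
    ∑ x, P x * (g x - Real.log (P x)) ≤ Real.log (∑ x, Real.exp (g x)) := by
  set Z := ∑ x, Real.exp (g x) with hZdef
  have hZ : 0 < Z := Finset.sum_pos (fun x _ => Real.exp_pos _) Finset.univ_nonempty
  have hterm : ∀ x, P x * (g x - Real.log (P x)) - P x * Real.log Z
      ≤ Real.exp (g x) / Z - P x := by
    intro x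
    rcases eq_or_lt_of_le (hP0 x) with h | h
    · simp [← h]; positivity
    · have ht : 0 < Real.exp (g x) / (P x * Z) := by positivity
      have hlog := Real.log_le_sub_one_of_pos ht
      have hrw : Real.log (Real.exp (g x) / (P x * Z)) = g x - Real.log (P x) - Real.log Z := by
        rw [Real.log_div (Real.exp_ne_zero _) (by positivity), Real.log_exp,
          Real.log_mul (ne_of_gt h) (ne_of_gt hZ)]
        ring
      rw [hrw] at hlog
      have h2 := mul_le_mul_of_nonneg_left hlog (le_of_lt h)
      calc P x * (g x - Real.log (P x)) - P x * Real.log Z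
          = P x * (g x - Real.log (P x) - Real.log Z) := by ring
        _ ≤ P x * (Real.exp (g x) / (P x * Z) - 1) := h2
        _ = Real.exp (g x) / Z - P x := by field_simp
  have hsum : ∑ x, (P x * (g x - Real.log (P x)) - P x * Real.log Z)
      ≤ ∑ x, (Real.exp (g x) / Z - P x) := Finset.sum_le_sum fun x _ => hterm x
  have hL : ∑ x, (P x * (g x - Real.log (P x)) - P x * Real.log Z)
      = (∑ x, P x * (g x - Real.log (P x))) - Real.log Z := by
    rw [Finset.sum_sub_distrib, ← Finset.sum_mul, hP1, one_mul]
  have hR : ∑ x, (Real.exp (g x) / Z - P x) = 0 := by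
    rw [Finset.sum_sub_distrib, hP1, ← Finset.sum_div, ← hZdef, div_self (ne_of_gt hZ)]
    ring
  rw [hL, hR] at hsum
  linarith

end aux

/-- **Blahut–Arimoto step (c): the Gibbs pmf maximizes the Lagrangian.**
With `g(x) = Σ_{s,y} P_S(s) W(y|x,s) ln Q(x|y,s) − λ b(x) − μ c(x)` and
`P*(x) = e^{g(x)} / Σ_{x'} e^{g(x')}`, the pmf `P*` maximizes
`P ↦ J_μ(P, Q) − λ Σ_x P(x) b(x)` over all pmfs `P`; in particular, if
`Σ_x P*(x) b(x) = B` then `P*` maximizes `J_μ(·, Q)` over all pmfs `P` with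
`Σ_x P(x) b(x) ≤ B`. -/
theorem stmt_9
    {𝒳 𝒮 𝒴 : Type} [Fintype 𝒳] [Fintype 𝒮] [Fintype 𝒴]
    (PS : 𝒮 → ℝ) (hPS0 : ∀ s, 0 ≤ PS s) (hPS1 : ∑ s, PS s = 1)
    (W : 𝒳 → 𝒮 → 𝒴 → ℝ) (hW0 : ∀ x s y, 0 ≤ W x s y)
    (hW1 : ∀ x s, ∑ y, W x s y = 1)
    (b c : 𝒳 → ℝ) (hb : ∀ x, 0 ≤ b x) (hc : ∀ x, 0 ≤ c x)
    (μ : ℝ) (hμ : 0 ≤ μ) (lam : ℝ) (hlam : 0 ≤ lam)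
    (Q : 𝒴 → 𝒮 → 𝒳 → ℝ) (hQ : ∀ y s x, 0 < Q y s x)
    (hQ1 : ∀ y s, ∑ x, Q y s x = 1)
    (g : 𝒳 → ℝ)
    (hg : ∀ x, g x =
      (∑ s, ∑ y, PS s * W x s y * Real.log (Q y s x)) - lam * b x - μ * c x)
    (Pstar : 𝒳 → ℝ)
    (hPstar : ∀ x, Pstar x = Real.exp (g x) / ∑ x', Real.exp (g x')) :
    (∀ P : 𝒳 → ℝ, (∀ x, 0 ≤ P x) → (∑ x, P x = 1) →
      Jmu PS W c μ P Q - lam * ∑ x, P x * b x ≤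
        Jmu PS W c μ Pstar Q - lam * ∑ x, Pstar x * b x)
    ∧ (∀ B : ℝ, (∑ x, Pstar x * b x = B) →
        ∀ P : 𝒳 → ℝ, (∀ x, 0 ≤ P x) → (∑ x, P x = 1) →
          (∑ x, P x * b x ≤ B) →
          Jmu PS W c μ P Q ≤ Jmu PS W c μ Pstar Q) := by
  rcases isEmpty_or_nonempty 𝒳 with hE | hNE
  · constructor
    · intro P hP0 hP1
      simp at hP1
    · intro B hB P hP0 hP1 hPb
      simp at hP1
  set Z := ∑ x', Real.exp (g x') with hZdef
  have hZ : 0 < Z := Finset.sum_pos (fun x _ => Real.exp_pos _) Finset.univ_nonempty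
  have hrw : ∀ P : 𝒳 → ℝ, (∀ x, 0 ≤ P x) →
      Jmu PS W c μ P Q - lam * ∑ x, P x * b x
        = ∑ x, P x * (g x - Real.log (P x)) := by
    intro P hP0
    unfold Jmu
    rw [Finset.sum_congr rfl
      (fun x _ => inner_rewrite PS hPS1 W hW1 Q hQ P hP0 x)]
    have h2 : ∀ x, P x * (g x - Real.log (P x))
        = P x * ((∑ s, ∑ y, PS s * W x s y * Real.log (Q y s x)) - Real.log (P x))
          - μ * (P x * c x) - lam * (P x * b x) := by
      intro x; rw [hg x]; ring
    rw [Finset.sum_congr rfl (fun x _ => h2 x)]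
    simp only [Finset.sum_sub_distrib, ← Finset.mul_sum]
  have hP0' : ∀ x, 0 ≤ Pstar x := fun x => by
    rw [hPstar x]; positivity
  have hP1' : ∑ x, Pstar x = 1 := by
    rw [Finset.sum_congr rfl (fun x _ => hPstar x), ← Finset.sum_div, ← hZdef,
      div_self (ne_of_gt hZ)]
  have hval : Jmu PS W c μ Pstar Q - lam * ∑ x, Pstar x * b x = Real.log Z := by
    rw [hrw Pstar hP0']
    have hl : ∀ x, Pstar x * (g x - Real.log (Pstar x)) = Pstar x * Real.log Z := by
      intro x
      rw [hPstar x, Real.log_div (Real.exp_ne_zero _) (ne_of_gt hZ), Real.log_exp]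
      ring
    rw [Finset.sum_congr rfl (fun x _ => hl x), ← Finset.sum_mul, hP1', one_mul]
  have part1 : ∀ P : 𝒳 → ℝ, (∀ x, 0 ≤ P x) → (∑ x, P x = 1) →
      Jmu PS W c μ P Q - lam * ∑ x, P x * b x ≤
        Jmu PS W c μ Pstar Q - lam * ∑ x, Pstar x * b x := by
    intro P hP0 hP1
    rw [hrw P hP0, hval]
    exact gibbs_ineq g P hP0 hP1
  refine ⟨part1, ?_⟩
  intro B hB P hP0 hP1 hPb
  have h := part1 P hP0 hP1
  have hbb : lam * ∑ x, P x * b x ≤ lam * B := mul_le_mul_of_nonneg_left hPb hlam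
  rw [hB] at h
  linarith
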